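/- L² Lipschitz estimate for the Schrödinger map: for every M ≥ 1 there is a constant C_M such that whenever φ, ψ ∈ E satisfy T(φ) = μ and T(ψ) = ν with μ, ν ∈ F_{++,M}, one has (Σ_{i=1}^N ‖φ_i − ψ_i‖²_{L²(m_i)})^{1/2} ≤ C_M (Σ_{i=1}^N ‖μ_i − ν_i‖²_{L²(m_i)})^{1/2}. -/

import Mathlib

open MeasureTheory Filter
open scoped ENNReal

noncomputable section

/-- The density kernel `γ_φ(x) = K(x) exp(∑_j φ_j(x_j))`. -/
def gammaFn {N : ℕ} {X : Fin N → Type*} (K : (∀ i, X i) → ℝ) (φ : ∀ i, X i → ℝ)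
    (x : ∀ i, X i) : ℝ :=
  K x * Real.exp (∑ j, φ j (x j))

/-- `T_i(φ)(x_i) = ∫_{X_{-i}} K(x_i, x_{-i}) exp(∑_j φ_j(x_j)) dm_{-i}(x_{-i})`.
Since every `m j` is a probability measure, integrating over the full product
(with the `i`-th coordinate replaced by `x_i` via `Function.update`) agrees with
integrating over `∏_{j ≠ i} X_j`. -/
def schrT {N : ℕ} {X : Fin N → Type*} [∀ i, MeasurableSpace (X i)]
    (m : ∀ i, Measure (X i)) (K : (∀ i, X i) → ℝ) (φ : ∀ i, X i → ℝ)
    (i : Fin N) (xi : X i) : ℝ :=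
  ∫ y, gammaFn K φ (Function.update y i xi) ∂Measure.pi m

/-- `L_{φ,i}(h)(x_i)`, the conditional-expectation type operator obtained by
linearizing the Schrödinger system. -/
def schrL {N : ℕ} {X : Fin N → Type*} [∀ i, MeasurableSpace (X i)]
    (m : ∀ i, Measure (X i)) (K : (∀ i, X i) → ℝ) (φ h : ∀ i, X i → ℝ)
    (i : Fin N) (xi : X i) : ℝ :=
  (∫ y, gammaFn K φ (Function.update y i xi) *
      ∑ j ∈ Finset.univ.erase i, h j (Function.update y i xi j) ∂Measure.pi m) /
  (∫ y, gammaFn K φ (Function.update y i xi) ∂Measure.pi m)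

/-- A tuple of essentially bounded measurable functions. -/
def BddTuple {N : ℕ} {X : Fin N → Type*} [∀ i, MeasurableSpace (X i)]
    (m : ∀ i, Measure (X i)) (φ : ∀ i, X i → ℝ) : Prop :=
  ∀ i, Measurable (φ i) ∧ MemLp (φ i) ⊤ (m i)

/-- Membership in `E`: essentially bounded measurable tuples with
`∫ φ_i dm_i = 0` for `i = 1, …, N-1` (i.e. all but the last index). -/
def InE {N : ℕ} {X : Fin N → Type*} [∀ i, MeasurableSpace (X i)]
    (m : ∀ i, Measure (X i)) (φ : ∀ i, X i → ℝ) : Prop :=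
  BddTuple m φ ∧ ∀ i : Fin N, (i : ℕ) < N - 1 → ∫ x, φ i x ∂m i = 0

/-- Membership in `F`: essentially bounded measurable tuples whose integrals all coincide. -/
def InF {N : ℕ} {X : Fin N → Type*} [∀ i, MeasurableSpace (X i)]
    (m : ∀ i, Measure (X i)) (μ : ∀ i, X i → ℝ) : Prop :=
  BddTuple m μ ∧ ∀ i j, ∫ x, μ i x ∂m i = ∫ x, μ j x ∂m j

/-- Membership in `F_{++}`: members of `F` which are bounded away from `0`. -/
def InFpp {N : ℕ} {X : Fin N → Type*} [∀ i, MeasurableSpace (X i)]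
    (m : ∀ i, Measure (X i)) (μ : ∀ i, X i → ℝ) : Prop :=
  InF m μ ∧ ∀ i, ∃ c : ℝ, 0 < c ∧ ∀ᵐ x ∂m i, c ≤ μ i x

/-- Membership in `F_{++,M}`: members of `F_{++}` with `1/M ≤ μ_i ≤ M` a.e. -/
def InFppM {N : ℕ} {X : Fin N → Type*} [∀ i, MeasurableSpace (X i)]
    (m : ∀ i, Measure (X i)) (M : ℝ) (μ : ∀ i, X i → ℝ) : Prop :=
  InFpp m μ ∧ ∀ i, ∀ᵐ x ∂m i, 1 / M ≤ μ i x ∧ μ i x ≤ M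

end

/-! Integrating out every coordinate but the `i`-th, `T(φ) = μ` gives
`a P_i e^{φ_i} ≤ μ_i ≤ b P_i e^{φ_i}` with `P_i = ∏_{j ≠ i} ∫ e^{φ_j}`. As all potentials but one
have mean zero, these bounds control every `P_i`, so that `e^{φ_i} ≥ c(N, a, b, M) > 0` whenever
`T(φ) = μ ∈ F_{++,M}`.

Put `h = φ - ψ` and `Sh(x) = ∑ⱼ hⱼ(xⱼ)`. Since `e^{∑ⱼ φⱼ(xⱼ)}` and `e^{∑ⱼ ψⱼ(xⱼ)}` are at least
`c^N`, the mean value theorem for `exp` gives `a c^N (Sh)² ≤ (γ_φ - γ_ψ) Sh` pointwise. Integrated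
over the product, the left side is `a c^N ∑ ‖hᵢ‖²` because the `hⱼ(xⱼ)` are independent and all
but one are centred, while Fubini turns the right side into `∑ ∫ (μᵢ - νᵢ) hᵢ`. The AM-GM
inequality then gives the estimate with `C = (a c^N)⁻¹`. -/

open Function Finset

theorem MeasureTheory.MemLp.exp {α : Type*} [MeasurableSpace α] {μ : Measure α} {f : α → ℝ}
    (hf : MemLp f ∞ μ) : MemLp (fun x => Real.exp (f x)) ∞ μ := by
  obtain ⟨C, hC⟩ := eLpNormEssSup_lt_top_iff_isBoundedUnder.mp
    (by simpa [eLpNorm_exponent_top] using hf.eLpNorm_lt_top)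
  refine memLp_top_of_bound (Real.continuous_exp.comp_aestronglyMeasurable hf.1) (Real.exp C) ?_
  filter_upwards [hC] with x hx
  rw [Real.norm_eq_abs, abs_of_pos (Real.exp_pos _), Real.exp_le_exp]
  exact (le_abs_self _).trans (by exact_mod_cast hx)

theorem mul_sq_le_exp_sub_mul_sub {c u v : ℝ} (hu : c ≤ Real.exp u) (hv : c ≤ Real.exp v) :
    c * (v - u) ^ 2 ≤ (Real.exp v - Real.exp u) * (v - u) := by
  wlog huv : u ≤ v generalizing u v
  · nlinarith [this hv hu (le_of_not_ge huv)]
  -- `exp v - exp u ≥ exp u * (v - u)` by convexity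
  have h := Real.add_one_le_exp (v - u)
  have hexp : Real.exp u * Real.exp (v - u) = Real.exp v := by rw [← Real.exp_add]; ring_nf
  nlinarith [Real.exp_pos u, sq_nonneg (v - u), mul_nonneg (Real.exp_pos u).le (sub_nonneg.mpr huv)]

section ZeroMean

variable {α : Type*} [MeasurableSpace α] {μ : Measure α} [IsProbabilityMeasure μ] {f : α → ℝ}
  {c P : ℝ}

theorem le_of_ae_le_exp_mul (hf : Integrable f μ) (hf0 : ∫ x, f x ∂μ = 0) (hP : 0 < P)
    (h : ∀ᵐ x ∂μ, c ≤ Real.exp (f x) * P) : c ≤ P := by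
  rcases le_or_gt c 0 with hc | hc
  · exact hc.trans hP.le
  have hlog : ∀ᵐ x ∂μ, Real.log (c / P) ≤ f x := h.mono fun x hx => by
    rw [Real.log_le_iff_le_exp (div_pos hc hP), div_le_iff₀ hP]; exact hx
  have := integral_mono_ae (integrable_const _) hf hlog
  rw [hf0, integral_const, probReal_univ, one_smul, Real.log_nonpos_iff (div_pos hc hP).le,
    div_le_one hP] at this
  exact this

theorem le_of_ae_exp_mul_le (hf : Integrable f μ) (hf0 : ∫ x, f x ∂μ = 0) (hP : 0 < P)
    (h : ∀ᵐ x ∂μ, Real.exp (f x) * P ≤ c) : P ≤ c := by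
  obtain ⟨x, hx⟩ := h.exists
  have hc : 0 < c := (mul_pos (Real.exp_pos _) hP).trans_le hx
  have hlog : ∀ᵐ x ∂μ, f x ≤ Real.log (c / P) := h.mono fun x hx => by
    rw [Real.le_log_iff_exp_le (div_pos hc hP), le_div_iff₀ hP]; exact hx
  have := integral_mono_ae hf (integrable_const _) hlog
  rw [hf0, integral_const, probReal_univ, one_smul, Real.log_nonneg_iff (div_pos hc hP),
    one_le_div hP] at this
  exact this

end ZeroMean

theorem sqrt_sum_integral_sq_le_of_mul_le {ι : Type*} [Fintype ι] {X : ι → Type*}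
    [∀ i, MeasurableSpace (X i)] {m : ∀ i, Measure (X i)} {f g : ∀ i, X i → ℝ}
    (hf : ∀ i, MemLp (f i) 2 (m i)) (hg : ∀ i, MemLp (g i) 2 (m i)) {κ : ℝ} (hκ : 0 < κ)
    (h : κ * ∑ i, ∫ x, g i x ^ 2 ∂m i ≤ ∑ i, ∫ x, f i x * g i x ∂m i) :
    Real.sqrt (∑ i, ∫ x, g i x ^ 2 ∂m i) ≤ κ⁻¹ * Real.sqrt (∑ i, ∫ x, f i x ^ 2 ∂m i) := by
  set S := ∑ i, ∫ x, g i x ^ 2 ∂m i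
  set D := ∑ i, ∫ x, f i x ^ 2 ∂m i
  -- integrate `2 κ f g ≤ f ^ 2 + κ ^ 2 g ^ 2`
  have hamgm : 2 * κ * ∑ i, ∫ x, f i x * g i x ∂m i ≤ D + κ ^ 2 * S := by
    simp only [S, D, mul_sum, ← sum_add_distrib, ← integral_const_mul]
    refine sum_le_sum fun i _ => ?_
    rw [← integral_add (hf i).integrable_sq ((hg i).integrable_sq.const_mul _)]
    refine integral_mono (((hf i).integrable_mul (hg i)).const_mul _)
      ((hf i).integrable_sq.add ((hg i).integrable_sq.const_mul _)) fun x => ?_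
    nlinarith [sq_nonneg (f i x - κ * g i x)]
  have hS : 0 ≤ S := sum_nonneg fun i _ => integral_nonneg fun x => sq_nonneg _
  rw [le_inv_mul_iff₀ hκ, ← Real.sqrt_sq hκ.le, ← Real.sqrt_mul (sq_nonneg _)]
  exact Real.sqrt_le_sqrt (by nlinarith)

section Pi

variable {ι : Type*} [Fintype ι] [DecidableEq ι] {X : ι → Type*} [∀ i, MeasurableSpace (X i)]
  (m : ∀ i, Measure (X i)) [∀ i, IsProbabilityMeasure (m i)]

theorem measurePreserving_update (i : ι) :
    MeasurePreserving (fun p : X i × (∀ j, X j) => update p.2 i p.1)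
      ((m i).prod (Measure.pi m)) (Measure.pi m) := by
  have hmeas : Measurable fun p : X i × (∀ j, X j) => update p.2 i p.1 :=
    measurable_update'.comp (measurable_snd.prodMk measurable_fst)
  refine ⟨hmeas, (Measure.pi_eq fun s hs => ?_).symm⟩
  have hpre : (fun p : X i × (∀ j, X j) => update p.2 i p.1) ⁻¹' Set.univ.pi s
      = s i ×ˢ Set.univ.pi (update s i Set.univ) := by
    ext ⟨z, y⟩
    simp only [Set.mem_preimage, Set.mem_pi, Set.mem_univ, true_implies, Set.mem_prod]
    rw [forall_update_iff (p := fun j (t : X j) => t ∈ s j),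
      forall_update_iff (p := fun j (t : Set (X j)) => y j ∈ t)]
    simp
  rw [Measure.map_apply hmeas (.univ_pi hs), hpre, Measure.prod_prod, Measure.pi_pi,
    ← mul_prod_erase univ _ (mem_univ i), update_self, measure_univ, one_mul,
    ← mul_prod_erase univ _ (mem_univ i)]
  exact congrArg _ (prod_congr rfl fun j hj => by rw [update_of_ne (ne_of_mem_erase hj)])

theorem ae_ae_update_of_ae {p : (∀ j, X j) → Prop} (hp : ∀ᵐ x ∂Measure.pi m, p x) (i : ι) :
    ∀ᵐ z ∂m i, ∀ᵐ y ∂Measure.pi m, p (update y i z) :=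
  Measure.ae_ae_of_ae_prod ((measurePreserving_update m i).quasiMeasurePreserving.ae hp)

theorem ae_integrable_update {f : (∀ j, X j) → ℝ} (hf : Integrable f (Measure.pi m)) (i : ι) :
    ∀ᵐ z ∂m i, Integrable (fun y => f (update y i z)) (Measure.pi m) :=
  ((measurePreserving_update m i).integrable_comp_of_integrable hf).prod_right_ae

theorem integral_integral_update {f : (∀ j, X j) → ℝ} (hf : Integrable f (Measure.pi m)) (i : ι) :
    ∫ z, ∫ y, f (update y i z) ∂Measure.pi m ∂m i = ∫ x, f x ∂Measure.pi m := by
  have hF := measurePreserving_update m i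
  calc ∫ z, ∫ y, f (update y i z) ∂Measure.pi m ∂m i
      = ∫ p, f (update p.2 i p.1) ∂(m i).prod (Measure.pi m) :=
        (integral_prod _ (hF.integrable_comp_of_integrable hf)).symm
    _ = ∫ x, f x ∂Measure.map _ ((m i).prod (Measure.pi m)) :=
        (integral_map hF.measurable.aemeasurable (by rw [hF.map_eq]; exact hf.1)).symm
    _ = ∫ x, f x ∂Measure.pi m := by rw [hF.map_eq]

theorem integral_finset_prod_comp_eval (s : Finset ι) (f : ∀ j, X j → ℝ) :
    ∫ x, ∏ j ∈ s, f j (x j) ∂Measure.pi m = ∏ j ∈ s, ∫ t, f j t ∂m j := by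
  calc ∫ x, ∏ j ∈ s, f j (x j) ∂Measure.pi m
      = ∫ x, ∏ j, (if j ∈ s then f j else 1) (x j) ∂Measure.pi m := by
        simp only [ite_apply, Pi.one_apply, prod_ite_mem, univ_inter]
    _ = ∏ j, ∫ t, (if j ∈ s then f j else 1) t ∂m j := integral_fintype_prod_eq_prod _
    _ = ∏ j, if j ∈ s then ∫ t, f j t ∂m j else 1 :=
        prod_congr rfl fun j _ => by split_ifs <;> simp
    _ = ∏ j ∈ s, ∫ t, f j t ∂m j := by rw [prod_ite_mem, univ_inter]

theorem integral_prod_comp_update (f : ∀ j, X j → ℝ) (i : ι) (z : X i) :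
    ∫ y, ∏ j, f j (update y i z j) ∂Measure.pi m = f i z * ∏ j ∈ univ.erase i, ∫ t, f j t ∂m j := by
  have hsplit : ∀ y : ∀ j, X j,
      ∏ j, f j (update y i z j) = f i z * ∏ j ∈ univ.erase i, f j (y j) := fun y => by
    rw [← mul_prod_erase _ _ (mem_univ i), update_self]
    exact congrArg _ (prod_congr rfl fun j hj => by rw [update_of_ne (ne_of_mem_erase hj)])
  simp_rw [hsplit, integral_const_mul, integral_finset_prod_comp_eval]

theorem integral_sum_comp_eval_sq {h : ∀ i, X i → ℝ} (hh : ∀ i, MemLp (h i) 2 (m i))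
    (h0 : Pairwise fun i j => ∫ z, h i z ∂m i = 0 ∨ ∫ z, h j z ∂m j = 0) :
    ∫ x, (∑ i, h i (x i)) ^ 2 ∂Measure.pi m = ∑ i, ∫ z, h i z ^ 2 ∂m i := by
  have hh' i : MemLp (fun x => h i (x i)) 2 (Measure.pi m) :=
    (hh i).comp_measurePreserving (measurePreserving_eval m i)
  have hcross : ∀ i j, i ≠ j → ∫ x, h i (x i) * h j (x j) ∂Measure.pi m = 0 := fun i j hij => by
    have := integral_finset_prod_comp_eval m {i, j} h
    simp_rw [prod_pair hij] at this
    rw [this]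
    rcases h0 hij with h0 | h0 <;> simp [h0]
  simp_rw [sq, sum_mul_sum]
  have hint i j : Integrable (fun x => h i (x i) * h j (x j)) (Measure.pi m) :=
    (hh' i).integrable_mul (hh' j)
  rw [integral_finsetSum _ fun i _ => integrable_finsetSum _ fun j _ => hint i j]
  refine sum_congr rfl fun i _ => ?_
  rw [integral_finsetSum _ fun j _ => hint i j,
    sum_eq_single i (fun j _ hji => hcross i j hji.symm) (by simp)]
  exact integral_comp_eval ((hh i).1.mul (hh i).1)

theorem ae_le_exp_of_ae_mem_Icc {φ : ∀ i, X i → ℝ} (hφ : ∀ i, Integrable (φ i) (m i))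
    (hexp : ∀ i, Integrable (fun z => Real.exp (φ i z)) (m i))
    (h0 : Pairwise fun i j => ∫ z, φ i z ∂m i = 0 ∨ ∫ z, φ j z ∂m j = 0) {α β : ℝ} (hα : 0 < α)
    (hαβ : α ≤ β) (h : ∀ i, ∀ᵐ z ∂m i,
      Real.exp (φ i z) * ∏ j ∈ univ.erase i, ∫ t, Real.exp (φ j t) ∂m j ∈ Set.Icc α β)
    (i : ι) : ∀ᵐ z ∂m i, α / max β ((β / α) ^ Fintype.card ι) ≤ Real.exp (φ i z) := by
  set E : ι → ℝ := fun j => ∫ t, Real.exp (φ j t) ∂m j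
  set P : ι → ℝ := fun i => ∏ j ∈ univ.erase i, E j
  have hE j : 0 < E j := integral_exp_pos (hexp j)
  have hP i : 0 < P i := prod_pos fun j _ => hE j
  have hP_le_of_mean_zero i (hi : ∫ z, φ i z ∂m i = 0) : P i ≤ β :=
    le_of_ae_exp_mul_le (hφ i) hi (hP i) ((h i).mono fun _ hz => hz.2)
  have hE_le_of_mean_zero j (hj : ∫ z, φ j z ∂m j = 0) : E j ≤ β / α := by
    have hαP : α ≤ P j := le_of_ae_le_exp_mul (hφ j) hj (hP j) ((h j).mono fun _ hz => hz.1)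
    have hEP : E j * P j ≤ β := by
      have := integral_mono_ae ((hexp j).mul_const (P j)) (integrable_const β)
        ((h j).mono fun _ hz => hz.2)
      rwa [integral_mul_const, integral_const, probReal_univ, one_smul] at this
    rw [le_div_iff₀ hα]
    nlinarith [hE j]
  have hP_le i : P i ≤ max β ((β / α) ^ Fintype.card ι) := by
    by_cases hi : ∫ z, φ i z ∂m i = 0
    · exact le_max_of_le_left (hP_le_of_mean_zero i hi)
    -- all the other potentials have mean zero
    refine le_max_of_le_right ?_
    calc P i ≤ ∏ _j ∈ univ.erase i, β / α := prod_le_prod (fun j _ => (hE j).le)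
          fun j hj => hE_le_of_mean_zero j ((h0 (ne_of_mem_erase hj)).resolve_right hi)
      _ ≤ (β / α) ^ Fintype.card ι := by
          rw [prod_const]
          exact pow_le_pow_right₀ ((one_le_div hα).mpr hαβ) (card_erase_le.trans_eq card_univ)
  filter_upwards [h i] with z hz
  rw [div_le_iff₀ (lt_max_of_lt_left (hα.trans_le hαβ))]
  exact hz.1.trans (mul_le_mul_of_nonneg_left (hP_le i) (Real.exp_pos _).le)

end Pi

theorem mul_sq_le_gammaFn_sub_mul {N : ℕ} {X : Fin N → Type*} {K : (∀ i, X i) → ℝ}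
    {φ ψ : ∀ i, X i → ℝ} {a c : ℝ} (ha : 0 ≤ a) (hc : 0 ≤ c) {x : ∀ i, X i}
    (hK : a ≤ K x) (hφ : ∀ j, c ≤ Real.exp (φ j (x j))) (hψ : ∀ j, c ≤ Real.exp (ψ j (x j))) :
    a * c ^ N * (∑ j, (φ j (x j) - ψ j (x j))) ^ 2
      ≤ (gammaFn K φ x - gammaFn K ψ x) * ∑ j, (φ j (x j) - ψ j (x j)) := by
  have hpow (θ : ∀ i, X i → ℝ) (hθ : ∀ j, c ≤ Real.exp (θ j (x j))) :
      c ^ N ≤ Real.exp (∑ j, θ j (x j)) := by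
    rw [Real.exp_sum]
    calc c ^ N = ∏ _j : Fin N, c := by simp
      _ ≤ _ := prod_le_prod (fun _ _ => hc) fun j _ => hθ j
  have key := mul_sq_le_exp_sub_mul_sub (hpow ψ hψ) (hpow φ hφ)
  have hnn := (mul_nonneg (pow_nonneg hc N) (sq_nonneg _)).trans key
  simp only [gammaFn, sum_sub_distrib]
  calc a * c ^ N * (∑ j, φ j (x j) - ∑ j, ψ j (x j)) ^ 2
      ≤ a * ((Real.exp (∑ j, φ j (x j)) - Real.exp (∑ j, ψ j (x j)))
          * (∑ j, φ j (x j) - ∑ j, ψ j (x j))) := by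
        rw [mul_assoc]; exact mul_le_mul_of_nonneg_left key ha
    _ ≤ K x * ((Real.exp (∑ j, φ j (x j)) - Real.exp (∑ j, ψ j (x j)))
          * (∑ j, φ j (x j) - ∑ j, ψ j (x j))) := mul_le_mul_of_nonneg_right hK hnn
    _ = _ := by ring

section Schrodinger

variable {N : ℕ} {X : Fin N → Type*} [∀ i, MeasurableSpace (X i)] {m : ∀ i, Measure (X i)}
  {K : (∀ i, X i) → ℝ} {φ ψ : ∀ i, X i → ℝ}

theorem InE.memLp (hφ : InE m φ) (i : Fin N) : MemLp (φ i) ∞ (m i) := (hφ.1 i).2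

theorem InE.pairwise_integral_eq_zero (hφ : InE m φ) :
    Pairwise fun i j => ∫ z, φ i z ∂m i = 0 ∨ ∫ z, φ j z ∂m j = 0 := fun i j hij => by
  by_cases hi : (i : ℕ) < N - 1
  · exact .inl (hφ.2 i hi)
  · have := Fin.val_ne_of_ne hij
    exact .inr (hφ.2 j (by omega))

theorem InFppM.memLp {M : ℝ} {μ : ∀ i, X i → ℝ} (hμ : InFppM m M μ) (i : Fin N) :
    MemLp (μ i) ∞ (m i) :=
  (hμ.1.1.1 i).2

variable [∀ i, IsProbabilityMeasure (m i)]

theorem InE.integrable (hφ : InE m φ) (i : Fin N) : Integrable (φ i) (m i) :=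
  (hφ.memLp i).integrable le_top

theorem InE.sub (hφ : InE m φ) (hψ : InE m ψ) : InE m fun i x => φ i x - ψ i x :=
  ⟨fun i => ⟨(hφ.1 i).1.sub (hψ.1 i).1, (hφ.memLp i).sub (hψ.memLp i)⟩, fun i hi => by
    rw [integral_sub (hφ.integrable i) (hψ.integrable i), hφ.2 i hi, hψ.2 i hi, sub_zero]⟩

theorem memLp_gammaFn (hK : MemLp K ∞ (Measure.pi m)) (hφ : ∀ j, MemLp (φ j) ∞ (m j)) :
    MemLp (gammaFn K φ) ∞ (Measure.pi m) :=
  (memLp_finsetSum univ fun j _ =>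
    (hφ j).comp_measurePreserving (measurePreserving_eval m j)).exp.mul' hK

theorem integral_gammaFn_mul_comp_eval (i : Fin N) {g : X i → ℝ}
    (hγ : Integrable (fun x => gammaFn K φ x * g (x i)) (Measure.pi m)) :
    ∫ x, gammaFn K φ x * g (x i) ∂Measure.pi m = ∫ z, schrT m K φ i z * g z ∂m i := by
  rw [← integral_integral_update m hγ i]
  simp only [update_self, integral_mul_const, schrT]

theorem schrT_const (c : ℝ) (φ : ∀ i, X i → ℝ) (i : Fin N) (z : X i) :
    schrT m (fun _ => c) φ i z
      = c * (Real.exp (φ i z) * ∏ j ∈ univ.erase i, ∫ t, Real.exp (φ j t) ∂m j) := by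
  simp only [schrT, gammaFn, Real.exp_sum, integral_const_mul,
    integral_prod_comp_update m (fun j t => Real.exp (φ j t))]

theorem schrT_mono_ae {K' : (∀ i, X i) → ℝ} (hKK' : ∀ᵐ x ∂Measure.pi m, K x ≤ K' x)
    (hK : Integrable (gammaFn K φ) (Measure.pi m))
    (hK' : Integrable (gammaFn K' φ) (Measure.pi m)) (i : Fin N) :
    ∀ᵐ z ∂m i, schrT m K φ i z ≤ schrT m K' φ i z := by
  filter_upwards [ae_integrable_update m hK i, ae_integrable_update m hK' i,
    ae_ae_update_of_ae m hKK' i] with z hKz hK'z hz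
  exact integral_mono_ae hKz hK'z
    (hz.mono fun y hy => mul_le_mul_of_nonneg_right hy (Real.exp_pos _).le)

theorem ae_schrT_mem_Icc {a b : ℝ} (hK : MemLp K ∞ (Measure.pi m))
    (hKab : ∀ᵐ x ∂Measure.pi m, a ≤ K x ∧ K x ≤ b) (hφ : ∀ j, MemLp (φ j) ∞ (m j)) (i : Fin N) :
    ∀ᵐ z ∂m i, schrT m K φ i z ∈ Set.Icc
      (a * (Real.exp (φ i z) * ∏ j ∈ univ.erase i, ∫ t, Real.exp (φ j t) ∂m j))
      (b * (Real.exp (φ i z) * ∏ j ∈ univ.erase i, ∫ t, Real.exp (φ j t) ∂m j)) := by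
  have hγ (K : (∀ i, X i) → ℝ) (hK : MemLp K ∞ (Measure.pi m)) :=
    (memLp_gammaFn hK hφ).integrable le_top
  filter_upwards [schrT_mono_ae (hKab.mono fun _ h => h.1) (hγ _ (memLp_const a)) (hγ K hK) i,
    schrT_mono_ae (hKab.mono fun _ h => h.2) (hγ K hK) (hγ _ (memLp_const b)) i] with z ha hb
  rw [schrT_const] at ha hb
  exact ⟨ha, hb⟩

theorem exists_pos_forall_ae_le_exp {a b : ℝ} (ha : 0 < a) (hab : a ≤ b)
    (hK : MemLp K ∞ (Measure.pi m)) (hKab : ∀ᵐ x ∂Measure.pi m, a ≤ K x ∧ K x ≤ b)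
    {M : ℝ} (hM : 1 ≤ M) :
    ∃ c > 0, ∀ φ μ : ∀ i, X i → ℝ, InE m φ → InFppM m M μ → (∀ i, schrT m K φ i =ᵐ[m i] μ i) →
      ∀ i, ∀ᵐ z ∂m i, c ≤ Real.exp (φ i z) := by
  have hb : 0 < b := ha.trans_le hab
  have hM0 : 0 < M := one_pos.trans_le hM
  have hαβ : 1 / (M * b) ≤ M / a := by
    rw [div_le_div_iff₀ (by positivity) ha]
    nlinarith [mul_le_mul hM hM zero_le_one hM0.le]
  refine ⟨1 / (M * b) / max (M / a) ((M / a / (1 / (M * b))) ^ N), by positivity,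
    fun φ μ hφ hμ hT i => ?_⟩
  have h := ae_le_exp_of_ae_mem_Icc m hφ.integrable (fun j => (hφ.memLp j).exp.integrable le_top)
    hφ.pairwise_integral_eq_zero (by positivity) hαβ (fun i => ?_) i
  · simpa only [Fintype.card_fin] using h
  filter_upwards [ae_schrT_mem_Icc hK hKab hφ.memLp i, hT i, hμ.2 i] with z hKz hTz hμz
  rw [hTz] at hKz
  set e := Real.exp (φ i z) * ∏ j ∈ univ.erase i, ∫ t, Real.exp (φ j t) ∂m j
  have hlow := hμz.1.trans hKz.2
  rw [div_le_iff₀ hM0] at hlow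
  constructor
  · rw [div_le_iff₀ (by positivity)]
    linarith
  · rw [le_div_iff₀' ha]
    exact hKz.1.trans hμz.2

theorem integral_gammaFn_mul_sum_comp_eval (hK : MemLp K ∞ (Measure.pi m))
    (hφ : ∀ j, MemLp (φ j) ∞ (m j)) {h : ∀ i, X i → ℝ} (hh : ∀ j, MemLp (h j) ∞ (m j)) :
    ∫ x, gammaFn K φ x * ∑ j, h j (x j) ∂Measure.pi m = ∑ j, ∫ z, schrT m K φ j z * h j z ∂m j := by
  have hint j : Integrable (fun x => gammaFn K φ x * h j (x j)) (Measure.pi m) :=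
    (((hh j).comp_measurePreserving (measurePreserving_eval m j)).mul'
      (memLp_gammaFn hK hφ)).integrable le_top
  simp_rw [mul_sum]
  rw [integral_finsetSum _ fun j _ => hint j]
  exact sum_congr rfl fun j _ => integral_gammaFn_mul_comp_eval j (hint j)

theorem mul_sum_integral_sq_sub_le_sum_integral_mul {a c : ℝ} (ha : 0 ≤ a) (hc : 0 ≤ c)
    (hK : MemLp K ∞ (Measure.pi m)) (hKa : ∀ᵐ x ∂Measure.pi m, a ≤ K x)
    (hφ : InE m φ) (hψ : InE m ψ) (hφc : ∀ i, ∀ᵐ z ∂m i, c ≤ Real.exp (φ i z))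
    (hψc : ∀ i, ∀ᵐ z ∂m i, c ≤ Real.exp (ψ i z)) {μ ν : ∀ i, X i → ℝ}
    (hμ : ∀ i, MemLp (μ i) ∞ (m i)) (hν : ∀ i, MemLp (ν i) ∞ (m i))
    (hTφ : ∀ i, schrT m K φ i =ᵐ[m i] μ i) (hTψ : ∀ i, schrT m K ψ i =ᵐ[m i] ν i) :
    a * c ^ N * ∑ i, ∫ z, (φ i z - ψ i z) ^ 2 ∂m i
      ≤ ∑ i, ∫ z, (μ i z - ν i z) * (φ i z - ψ i z) ∂m i := by
  set h : ∀ i, X i → ℝ := fun i z => φ i z - ψ i z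
  have hh : InE m h := hφ.sub hψ
  have hS : MemLp (fun x => ∑ j, h j (x j)) ∞ (Measure.pi m) :=
    memLp_finsetSum univ fun j _ => (hh.memLp j).comp_measurePreserving (measurePreserving_eval m j)
  have hγS (θ : ∀ i, X i → ℝ) (hθ : InE m θ) :
      Integrable (fun x => gammaFn K θ x * ∑ j, h j (x j)) (Measure.pi m) :=
    (hS.mul' (memLp_gammaFn hK hθ.memLp)).integrable le_top
  have hμh (μ : ∀ i, X i → ℝ) (hμ : ∀ i, MemLp (μ i) ∞ (m i)) (i : Fin N) :
      Integrable (fun z => μ i z * h i z) (m i) :=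
    ((hh.memLp i).mul' (hμ i)).integrable le_top
  have hdual (θ μ : ∀ i, X i → ℝ) (hθ : InE m θ) (hT : ∀ i, schrT m K θ i =ᵐ[m i] μ i) :
      ∫ x, gammaFn K θ x * ∑ j, h j (x j) ∂Measure.pi m = ∑ i, ∫ z, μ i z * h i z ∂m i := by
    rw [integral_gammaFn_mul_sum_comp_eval hK hθ.memLp hh.memLp]
    exact sum_congr rfl fun i _ =>
      integral_congr_ae ((hT i).mono fun z hz => congrArg (· * h i z) hz)
  calc a * c ^ N * ∑ i, ∫ z, h i z ^ 2 ∂m i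
      = ∫ x, a * c ^ N * (∑ j, h j (x j)) ^ 2 ∂Measure.pi m := by
        rw [integral_const_mul, integral_sum_comp_eval_sq m
          (fun i => (hh.memLp i).mono_exponent le_top) hh.pairwise_integral_eq_zero]
    _ ≤ ∫ x, (gammaFn K φ x - gammaFn K ψ x) * ∑ j, h j (x j) ∂Measure.pi m := by
        refine integral_mono_ae ((hS.mono_exponent le_top).integrable_sq.const_mul _)
          (by simp_rw [sub_mul]; exact (hγS φ hφ).sub (hγS ψ hψ)) ?_
        filter_upwards [hKa, ae_all_iff.2 fun j =>
            (measurePreserving_eval m j).quasiMeasurePreserving.ae (hφc j),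
          ae_all_iff.2 fun j => (measurePreserving_eval m j).quasiMeasurePreserving.ae (hψc j)]
          with x hKx hφx hψx
        exact mul_sq_le_gammaFn_sub_mul ha hc hKx hφx hψx
    _ = ∑ i, ∫ z, (μ i z - ν i z) * h i z ∂m i := by
        simp_rw [sub_mul]
        rw [integral_sub (hγS φ hφ) (hγS ψ hψ), hdual φ μ hφ hTφ, hdual ψ ν hψ hTψ,
          ← sum_sub_distrib]
        exact sum_congr rfl fun i _ => (integral_sub (hμh μ hμ i) (hμh ν hν i)).symm

end Schrodinger

theorem schrodinger_map_L2_lipschitz_general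
    {N : ℕ} {X : Fin N → Type*} [∀ i, MeasurableSpace (X i)]
    (m : ∀ i, MeasureTheory.Measure (X i)) [∀ i, MeasureTheory.IsProbabilityMeasure (m i)]
    (K : (∀ i, X i) → ℝ) (a b : ℝ) (ha : 0 < a) (hab : a ≤ b)
    (hK : Measurable K) (hKb : ∀ᵐ x ∂MeasureTheory.Measure.pi m, a ≤ K x ∧ K x ≤ b) :
    ∀ M : ℝ, 1 ≤ M → ∃ C : ℝ, ∀ φ ψ μ ν : ∀ i, X i → ℝ,
      InE m φ → InE m ψ → InFppM m M μ → InFppM m M ν →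
      (∀ i, schrT m K φ i =ᵐ[m i] μ i) → (∀ i, schrT m K ψ i =ᵐ[m i] ν i) →
      Real.sqrt (∑ i, ∫ x, (φ i x - ψ i x) ^ 2 ∂m i) ≤
        C * Real.sqrt (∑ i, ∫ x, (μ i x - ν i x) ^ 2 ∂m i) := by
  intro M hM
  have hKbdd : MemLp K ∞ (Measure.pi m) := memLp_top_of_bound hK.aestronglyMeasurable b
    (hKb.mono fun x hx => abs_le.2 ⟨by linarith [hx.1], hx.2⟩)
  obtain ⟨c, hc, hlow⟩ := exists_pos_forall_ae_le_exp ha hab hKbdd hKb hM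
  refine ⟨(a * c ^ N)⁻¹, fun φ ψ μ ν hφ hψ hμ hν hTφ hTψ => ?_⟩
  refine sqrt_sum_integral_sq_le_of_mul_le
    (fun i => ((hμ.memLp i).sub (hν.memLp i)).mono_exponent le_top)
    (fun i => ((hφ.sub hψ).memLp i).mono_exponent le_top) (by positivity) ?_
  exact mul_sum_integral_sq_sub_le_sum_integral_mul ha.le hc.le hKbdd (hKb.mono fun _ h => h.1)
    hφ hψ (hlow φ μ hφ hμ hTφ) (hlow ψ ν hψ hν hTψ) hμ.memLp hν.memLp hTφ hTψ

/-- `L²` Lipschitz estimate for the Schrödinger map. -/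
theorem schrodinger_map_L2_lipschitz
    {N : ℕ} (hN : 2 ≤ N) {X : Fin N → Type*} [∀ i, MeasurableSpace (X i)]
    (m : ∀ i, MeasureTheory.Measure (X i)) [∀ i, MeasureTheory.IsProbabilityMeasure (m i)]
    (K : (∀ i, X i) → ℝ) (a b : ℝ) (ha : 0 < a) (hab : a ≤ b)
    (hK : Measurable K) (hKb : ∀ᵐ x ∂MeasureTheory.Measure.pi m, a ≤ K x ∧ K x ≤ b) :
    ∀ M : ℝ, 1 ≤ M → ∃ C : ℝ, ∀ φ ψ μ ν : ∀ i, X i → ℝ,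
      InE m φ → InE m ψ → InFppM m M μ → InFppM m M ν →
      (∀ i, schrT m K φ i =ᵐ[m i] μ i) → (∀ i, schrT m K ψ i =ᵐ[m i] ν i) →
      Real.sqrt (∑ i, ∫ x, (φ i x - ψ i x) ^ 2 ∂m i) ≤
        C * Real.sqrt (∑ i, ∫ x, (μ i x - ν i x) ^ 2 ∂m i) :=
  schrodinger_map_L2_lipschitz_general m K a b ha hab hK hKb
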